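/- Energy decay/uniqueness for an abstract homogeneous coupled evolution: Let H₁, H₂, H₃ be real inner product spaces and let u, q, p : [0,T] → H₁ × H₂ × H₃ (componentwise) be continuously differentiable with u(0) = 0, q(0) = 0, p(0) = 0. Suppose for all t: 2μ⟨E u(t), E v⟩ − ⟨q(t), B v⟩ = 0 for all v; λ⁻¹⟨q'(t) − p'(t), w⟩ + ⟨B u'(t), w⟩ = 0 for all w ∈ H₂; and −λ⁻¹⟨q'(t) − p'(t), r⟩ + κ⟨G p(t), G r⟩ = 0 for all r ∈ H₃, where E, B, G are bounded linear maps, μ, λ, κ > 0. Then for all t, E u(t) = 0, q(t) = p(t), and G p(t) = 0. -/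

import Mathlib

/-!
Testing the three equations with `v = u'`, `w = q`, `r = p` and adding them shows that the energy
`μ ‖E u‖² + (2 λ)⁻¹ ‖q - p‖²` has derivative `-κ ‖G p‖² ≤ 0`. Being nonnegative and zero at time
`0`, the energy vanishes on `[0, T]`, which gives `E u = 0` and `q = p`. Then `q' - p' = 0` on
`[0, T]`, and the third equation tested with `r = p` leaves `κ ‖G p‖² = 0`.
-/

open Set
open scoped RealInnerProductSpace

theorem nonpos_of_hasDerivAt_nonpos {f f' : ℝ → ℝ} {a b : ℝ}
    (hf : ∀ t ∈ Icc a b, HasDerivAt f (f' t) t) (hf' : ∀ t ∈ Ico a b, f' t ≤ 0) (ha : f a ≤ 0) :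
    ∀ t ∈ Icc a b, f t ≤ 0 :=
  image_le_of_deriv_right_le_deriv_boundary
    (continuousOn_of_forall_continuousAt fun t ht => (hf t ht).continuousAt)
    (fun t ht => (hf t (Ico_subset_Icc_self ht)).hasDerivWithinAt) ha continuousOn_const
    (fun t _ => hasDerivWithinAt_const t _ 0) hf'

theorem HasDerivAt.eq_zero_of_eqOn_Icc {F : Type*} [NormedAddCommGroup F] [NormedSpace ℝ F]
    {f : ℝ → F} {f' : F} {a b t : ℝ} (hab : a < b) (ht : t ∈ Icc a b) (hf : HasDerivAt f f' t)
    (h0 : EqOn f 0 (Icc a b)) : f' = 0 :=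
  (uniqueDiffOn_Icc hab t ht).eq_deriv _ hf.hasDerivWithinAt
    ((hasDerivWithinAt_const t _ 0).congr h0 (h0 ht))

section Biot

variable {H₁ H₂ H₄ : Type*}
  [NormedAddCommGroup H₁] [InnerProductSpace ℝ H₁]
  [NormedAddCommGroup H₂] [InnerProductSpace ℝ H₂]
  [NormedAddCommGroup H₄] [InnerProductSpace ℝ H₄]

noncomputable def biotEnergy (μ lam : ℝ) (E : H₁ →L[ℝ] H₄) (u : H₁) (q p : H₂) : ℝ :=
  μ * ‖E u‖ ^ 2 + lam⁻¹ / 2 * ‖q - p‖ ^ 2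

omit [InnerProductSpace ℝ H₂] in
theorem biotEnergy_nonneg {μ lam : ℝ} (hμ : 0 ≤ μ) (hlam : 0 ≤ lam) (E : H₁ →L[ℝ] H₄)
    (u : H₁) (q p : H₂) : 0 ≤ biotEnergy μ lam E u q p := by
  unfold biotEnergy
  positivity

omit [InnerProductSpace ℝ H₂] in
theorem biotEnergy_eq_zero_iff {μ lam : ℝ} (hμ : 0 < μ) (hlam : 0 < lam) (E : H₁ →L[ℝ] H₄)
    {u : H₁} {q p : H₂} : biotEnergy μ lam E u q p = 0 ↔ E u = 0 ∧ q = p := by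
  have hlam' : 0 < lam⁻¹ / 2 := by positivity
  rw [biotEnergy, add_eq_zero_iff_of_nonneg (by positivity) (by positivity),
    mul_eq_zero, mul_eq_zero, or_iff_right hμ.ne', or_iff_right hlam'.ne', sq_eq_zero_iff,
    sq_eq_zero_iff, norm_eq_zero, norm_eq_zero, sub_eq_zero]

theorem hasDerivAt_biotEnergy (μ lam : ℝ) (E : H₁ →L[ℝ] H₄) {u : ℝ → H₁} {q p : ℝ → H₂}
    {u₁ : H₁} {q₁ p₁ : H₂} {t : ℝ} (hu : HasDerivAt u u₁ t) (hq : HasDerivAt q q₁ t)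
    (hp : HasDerivAt p p₁ t) :
    HasDerivAt (fun s => biotEnergy μ lam E (u s) (q s) (p s))
      (2 * μ * ⟪E (u t), E u₁⟫ + lam⁻¹ * ⟪q t - p t, q₁ - p₁⟫) t := by
  have hEu := (E.hasFDerivAt.comp_hasDerivAt t hu).norm_sq
  have hqp := (hq.sub hp).norm_sq
  refine ((hEu.const_mul μ).add (hqp.const_mul (lam⁻¹ / 2))).congr_deriv ?_
  simp only [Function.comp_apply, Pi.sub_apply]
  ring

theorem biot_energy_identity (μ lam κ : ℝ) (E : H₁ →L[ℝ] H₄) (B : H₁ →L[ℝ] H₂)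
    (G : H₂ →L[ℝ] H₄) {u u' : H₁} {q q' p p' : H₂}
    (h₁ : 2 * μ * ⟪E u, E u'⟫ - ⟪q, B u'⟫ = 0)
    (h₂ : lam⁻¹ * ⟪q' - p', q⟫ + ⟪B u', q⟫ = 0)
    (h₃ : -(lam⁻¹ * ⟪q' - p', p⟫) + κ * ⟪G p, G p⟫ = 0) :
    2 * μ * ⟪E u, E u'⟫ + lam⁻¹ * ⟪q - p, q' - p'⟫ = -(κ * ‖G p‖ ^ 2) := by
  have hqp : ⟪q - p, q' - p'⟫ = ⟪q' - p', q⟫ - ⟪q' - p', p⟫ := by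
    rw [real_inner_comm, inner_sub_right]
  rw [hqp, ← real_inner_self_eq_norm_sq]
  linear_combination h₁ + h₂ + h₃ + real_inner_comm (B u') q

end Biot

theorem stmt8_general {H₁ H₂ H₄ : Type*}
    [NormedAddCommGroup H₁] [InnerProductSpace ℝ H₁]
    [NormedAddCommGroup H₂] [InnerProductSpace ℝ H₂]
    [NormedAddCommGroup H₄] [InnerProductSpace ℝ H₄]
    (E : H₁ →L[ℝ] H₄) (B : H₁ →L[ℝ] H₂) (G : H₂ →L[ℝ] H₄)
    (μ lam κ T : ℝ) (hμ : 0 < μ) (hlam : 0 < lam) (hκ : 0 < κ) (hT : 0 < T)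
    (u u' : ℝ → H₁) (q q' p p' : ℝ → H₂)
    (hu : ∀ t, HasDerivAt u (u' t) t)
    (hq : ∀ t, HasDerivAt q (q' t) t)
    (hp : ∀ t, HasDerivAt p (p' t) t)
    (hu0 : u 0 = 0) (hq0 : q 0 = 0) (hp0 : p 0 = 0)
    (heq1 : ∀ t ∈ Set.Icc 0 T, ∀ v : H₁,
      2 * μ * ⟪E (u t), E v⟫ - ⟪q t, B v⟫ = 0)
    (heq2 : ∀ t ∈ Set.Icc 0 T, ∀ w : H₂,
      lam⁻¹ * ⟪q' t - p' t, w⟫ + ⟪B (u' t), w⟫ = 0)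
    (heq3 : ∀ t ∈ Set.Icc 0 T, ∀ r : H₂,
      -(lam⁻¹ * ⟪q' t - p' t, r⟫) + κ * ⟪G (p t), G r⟫ = 0) :
    ∀ t ∈ Set.Icc 0 T, E (u t) = 0 ∧ q t = p t ∧ G (p t) = 0 := by
  have henergy_nonpos : ∀ t ∈ Icc 0 T, biotEnergy μ lam E (u t) (q t) (p t) ≤ 0 := by
    refine nonpos_of_hasDerivAt_nonpos (fun t _ => hasDerivAt_biotEnergy μ lam E
      (hu t) (hq t) (hp t)) (fun t ht => ?_) (by simp [biotEnergy, hu0, hq0, hp0])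
    have ht' := Ico_subset_Icc_self ht
    rw [biot_energy_identity μ lam κ E B G (heq1 t ht' _) (heq2 t ht' _) (heq3 t ht' _)]
    exact neg_nonpos.2 (mul_nonneg hκ.le (sq_nonneg _))
  have henergy : ∀ t ∈ Icc 0 T, E (u t) = 0 ∧ q t = p t := fun t ht =>
    (biotEnergy_eq_zero_iff hμ hlam E).1
      ((henergy_nonpos t ht).antisymm (biotEnergy_nonneg hμ.le hlam.le E _ _ _))
  intro t ht
  refine ⟨(henergy t ht).1, (henergy t ht).2, ?_⟩
  have hderiv : q' t - p' t = 0 := ((hq t).sub (hp t)).eq_zero_of_eqOn_Icc hT ht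
    fun s hs => sub_eq_zero.2 (henergy s hs).2
  have h₃ := heq3 t ht (p t)
  rw [hderiv, inner_zero_left, mul_zero, neg_zero, zero_add, mul_eq_zero,
    or_iff_right hκ.ne', inner_self_eq_zero] at h₃
  exact h₃

theorem stmt8 {H₁ H₂ H₄ : Type*}
    [NormedAddCommGroup H₁] [InnerProductSpace ℝ H₁]
    [NormedAddCommGroup H₂] [InnerProductSpace ℝ H₂]
    [NormedAddCommGroup H₄] [InnerProductSpace ℝ H₄]
    (E : H₁ →L[ℝ] H₄) (B : H₁ →L[ℝ] H₂) (G : H₂ →L[ℝ] H₄)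
    (μ lam κ T : ℝ) (hμ : 0 < μ) (hlam : 0 < lam) (hκ : 0 < κ) (hT : 0 < T)
    (u u' : ℝ → H₁) (q q' p p' : ℝ → H₂)
    (hu : ∀ t, HasDerivAt u (u' t) t) (hu' : Continuous u')
    (hq : ∀ t, HasDerivAt q (q' t) t) (hq' : Continuous q')
    (hp : ∀ t, HasDerivAt p (p' t) t) (hp' : Continuous p')
    (hu0 : u 0 = 0) (hq0 : q 0 = 0) (hp0 : p 0 = 0)
    (heq1 : ∀ t ∈ Set.Icc 0 T, ∀ v : H₁,
      2 * μ * ⟪E (u t), E v⟫ - ⟪q t, B v⟫ = 0)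
    (heq2 : ∀ t ∈ Set.Icc 0 T, ∀ w : H₂,
      lam⁻¹ * ⟪q' t - p' t, w⟫ + ⟪B (u' t), w⟫ = 0)
    (heq3 : ∀ t ∈ Set.Icc 0 T, ∀ r : H₂,
      -(lam⁻¹ * ⟪q' t - p' t, r⟫) + κ * ⟪G (p t), G r⟫ = 0) :
    ∀ t ∈ Set.Icc 0 T, E (u t) = 0 ∧ q t = p t ∧ G (p t) = 0 :=
  stmt8_general E B G μ lam κ T hμ hlam hκ hT u u' q q' p p' hu hq hp hu0 hq0 hp0 heq1 heq2 heq3
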